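/- arXiv:1612.09373 — 2 statements merged into one kernel-verified Lean document; each statement's English description precedes it below -/
import Mathlib

section
/- Over the reals, the cubic polynomial 4949*t^3 - 9379*t^2 + 5155*t - 875 has three distinct real roots, all lying strictly between 0 and 3/2, and none of them equal to 1. -/
private lemma cubic_cont : Continuous (fun t : ℝ => 4949*t^3 - 9379*t^2 + 5155*t - 875) := by
  continuity

private lemma only_three {r1 r2 r3 t : ℝ}
    (h1 : 4949*r1^3 - 9379*r1^2 + 5155*r1 - 875 = 0)
    (h2 : 4949*r2^3 - 9379*r2^2 + 5155*r2 - 875 = 0)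
    (h3 : 4949*r3^3 - 9379*r3^2 + 5155*r3 - 875 = 0)
    (h12 : r1 ≠ r2) (h13 : r1 ≠ r3) (h23 : r2 ≠ r3)
    (ht : 4949*t^3 - 9379*t^2 + 5155*t - 875 = 0) :
    t = r1 ∨ t = r2 ∨ t = r3 := by
  by_contra hc
  push_neg at hc
  obtain ⟨ht1, ht2, ht3⟩ := hc
  -- quadratic q(x) = 4949(x^2 + x r1 + r1^2) - 9379(x + r1) + 5155 vanishes at t, r2, r3
  have q : ∀ x : ℝ, 4949*x^3 - 9379*x^2 + 5155*x - 875 = 0 → x ≠ r1 →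
      4949*(x^2 + x*r1 + r1^2) - 9379*(x + r1) + 5155 = 0 := by
    intro x hx hxr
    have key : (x - r1) * (4949*(x^2 + x*r1 + r1^2) - 9379*(x + r1) + 5155) = 0 := by
      linear_combination hx - h1
    rcases mul_eq_zero.mp key with h | h
    · exact absurd (sub_eq_zero.mp h) hxr
    · exact h
  have qt := q t ht ht1
  have q2 := q r2 h2 (Ne.symm h12)
  have q3 := q r3 h3 (Ne.symm h13)
  -- linear factor: from qt - q2, (t - r2)(4949(t + r2 + r1) - 9379) = 0
  have l2 : (t - r2) * (4949*(t + r2 + r1) - 9379) = 0 := by linear_combination qt - q2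
  have l3 : (t - r3) * (4949*(t + r3 + r1) - 9379) = 0 := by linear_combination qt - q3
  have e2 : 4949*(t + r2 + r1) - 9379 = 0 := by
    rcases mul_eq_zero.mp l2 with h | h
    · exact absurd (sub_eq_zero.mp h) ht2
    · exact h
  have e3 : 4949*(t + r3 + r1) - 9379 = 0 := by
    rcases mul_eq_zero.mp l3 with h | h
    · exact absurd (sub_eq_zero.mp h) ht3
    · exact h
  have : r2 = r3 := by linarith
  exact h23 this

theorem stmt_10 :
    ∃ r1 r2 r3 : ℝ, r1 ≠ r2 ∧ r1 ≠ r3 ∧ r2 ≠ r3 ∧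
      (0 < r1 ∧ r1 < 3/2 ∧ r1 ≠ 1 ∧ 4949*r1^3 - 9379*r1^2 + 5155*r1 - 875 = 0) ∧
      (0 < r2 ∧ r2 < 3/2 ∧ r2 ≠ 1 ∧ 4949*r2^3 - 9379*r2^2 + 5155*r2 - 875 = 0) ∧
      (0 < r3 ∧ r3 < 3/2 ∧ r3 ≠ 1 ∧ 4949*r3^3 - 9379*r3^2 + 5155*r3 - 875 = 0) ∧
      (∀ t : ℝ, 4949*t^3 - 9379*t^2 + 5155*t - 875 = 0 → t = r1 ∨ t = r2 ∨ t = r3) := by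
  have hco := cubic_cont.continuousOn (s := Set.univ)
  -- root 1 in (9/25, 39/100): f(9/25) < 0 < f(39/100)
  obtain ⟨r1, hr1m, hr1⟩ : ∃ x ∈ Set.Ioo (9/25 : ℝ) (39/100),
      4949*x^3 - 9379*x^2 + 5155*x - 875 = 0 := by
    have h := intermediate_value_Ioo (by norm_num : (9/25 : ℝ) ≤ 39/100)
      cubic_cont.continuousOn
    have h0 : (0:ℝ) ∈ Set.Ioo (4949*(9/25:ℝ)^3 - 9379*(9/25)^2 + 5155*(9/25) - 875)
        (4949*(39/100:ℝ)^3 - 9379*(39/100)^2 + 5155*(39/100) - 875) := by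
      constructor <;> norm_num
    obtain ⟨x, hx, hfx⟩ := h h0
    exact ⟨x, hx, hfx⟩
  -- root 2 in (39/100, 9/20): f(39/100) > 0 > f(9/20)
  obtain ⟨r2, hr2m, hr2⟩ : ∃ x ∈ Set.Ioo (39/100 : ℝ) (9/20),
      4949*x^3 - 9379*x^2 + 5155*x - 875 = 0 := by
    have h := intermediate_value_Ioo' (by norm_num : (39/100 : ℝ) ≤ 9/20)
      cubic_cont.continuousOn
    have h0 : (0:ℝ) ∈ Set.Ioo (4949*(9/20:ℝ)^3 - 9379*(9/20)^2 + 5155*(9/20) - 875)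
        (4949*(39/100:ℝ)^3 - 9379*(39/100)^2 + 5155*(39/100) - 875) := by
      constructor <;> norm_num
    obtain ⟨x, hx, hfx⟩ := h h0
    exact ⟨x, hx, hfx⟩
  -- root 3 in (1, 11/10): f(1) < 0 < f(11/10)
  obtain ⟨r3, hr3m, hr3⟩ : ∃ x ∈ Set.Ioo (1 : ℝ) (11/10),
      4949*x^3 - 9379*x^2 + 5155*x - 875 = 0 := by
    have h := intermediate_value_Ioo (by norm_num : (1 : ℝ) ≤ 11/10)
      cubic_cont.continuousOn
    have h0 : (0:ℝ) ∈ Set.Ioo (4949*(1:ℝ)^3 - 9379*(1:ℝ)^2 + 5155*(1:ℝ) - 875)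
        (4949*(11/10:ℝ)^3 - 9379*(11/10)^2 + 5155*(11/10) - 875) := by
      constructor <;> norm_num
    obtain ⟨x, hx, hfx⟩ := h h0
    exact ⟨x, hx, hfx⟩
  obtain ⟨hr1a, hr1b⟩ := hr1m
  obtain ⟨hr2a, hr2b⟩ := hr2m
  obtain ⟨hr3a, hr3b⟩ := hr3m
  have h12 : r1 ≠ r2 := by intro h; rw [h] at hr1b; linarith
  have h13 : r1 ≠ r3 := by intro h; rw [h] at hr1b; linarith
  have h23 : r2 ≠ r3 := by intro h; rw [h] at hr2b; linarith
  refine ⟨r1, r2, r3, h12, h13, h23,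
    ⟨by linarith, by linarith, by intro h; rw [h] at hr1b; linarith, hr1⟩,
    ⟨by linarith, by linarith, by intro h; rw [h] at hr2b; linarith, hr2⟩,
    ⟨by linarith, by linarith, by intro h; rw [h] at hr3a; linarith, hr3⟩,
    fun t ht => only_three hr1 hr2 hr3 h12 h13 h23 ht⟩
end

section
/- Over the reals, the cubic polynomial 319*t^3 - 585*t^2 + 298*t - 46 has three distinct real roots, all lying strictly in the open interval (0, 2), and t = 1 is not a root. -/
noncomputable def f17 : ℝ → ℝ := fun t => 319*t^3 - 585*t^2 + 298*t - 46

lemma f17_cont : Continuous f17 := by unfold f17; continuity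

lemma f17_root_of_neg_pos {a b : ℝ} (hab : a ≤ b) (ha : f17 a < 0) (hb : 0 < f17 b) :
    ∃ r ∈ Set.Ioo a b, f17 r = 0 := by
  have := intermediate_value_Ioo hab (f17_cont.continuousOn)
  have h0 : (0:ℝ) ∈ Set.Ioo (f17 a) (f17 b) := ⟨ha, hb⟩
  obtain ⟨r, hr, hr0⟩ := this h0
  exact ⟨r, hr, hr0⟩

lemma f17_root_of_pos_neg {a b : ℝ} (hab : a ≤ b) (ha : 0 < f17 a) (hb : f17 b < 0) :
    ∃ r ∈ Set.Ioo a b, f17 r = 0 := by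
  have := intermediate_value_Ioo' hab (f17_cont.continuousOn)
  have h0 : (0:ℝ) ∈ Set.Ioo (f17 b) (f17 a) := ⟨hb, ha⟩
  obtain ⟨r, hr, hr0⟩ := this h0
  exact ⟨r, hr, hr0⟩

theorem stmt_17 :
    (∃ r1 r2 r3 : ℝ, r1 ≠ r2 ∧ r1 ≠ r3 ∧ r2 ≠ r3 ∧
      (0 < r1 ∧ r1 < 2 ∧ 319*r1^3 - 585*r1^2 + 298*r1 - 46 = 0) ∧
      (0 < r2 ∧ r2 < 2 ∧ 319*r2^3 - 585*r2^2 + 298*r2 - 46 = 0) ∧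
      (0 < r3 ∧ r3 < 2 ∧ 319*r3^3 - 585*r3^2 + 298*r3 - 46 = 0)) ∧
    (319*(1:ℝ)^3 - 585*(1:ℝ)^2 + 298*1 - 46 ≠ 0) := by
  obtain ⟨r1, ⟨h1a, h1b⟩, h1⟩ := f17_root_of_neg_pos (a := 0) (b := 7/20)
    (by norm_num) (by unfold f17; norm_num) (by unfold f17; norm_num)
  obtain ⟨r2, ⟨h2a, h2b⟩, h2⟩ := f17_root_of_pos_neg (a := 7/20) (b := 1)
    (by norm_num) (by unfold f17; norm_num) (by unfold f17; norm_num)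
  obtain ⟨r3, ⟨h3a, h3b⟩, h3⟩ := f17_root_of_neg_pos (a := 1) (b := 2)
    (by norm_num) (by unfold f17; norm_num) (by unfold f17; norm_num)
  unfold f17 at h1 h2 h3
  refine ⟨⟨r1, r2, r3, by linarith, by linarith, by linarith,
    ⟨h1a, by linarith, h1⟩, ⟨by linarith, by linarith, h2⟩,
    ⟨by linarith, h3b, h3⟩⟩, by norm_num⟩
end
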